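/- Let p, q be homogeneous polynomials of the same degree k with q = c(x ∂p/∂y − y ∂p/∂x), and let h(u,v) be a polynomial. Then in polar coordinates the system ẋ = −y + x q(x,y) h(x²+y², p(x,y)), ẏ = x + y q(x,y) h(x²+y², p(x,y)) reduces to dρ/dθ = c ρ^{k+1} h(ρ², ρ^k f(θ)) f'(θ), where f(θ) = p(cos θ, sin θ). -/

import Mathlib

open Real MvPolynomial

/-!
Adding `cos θ` times the first equation to `sin θ` times the second cancels the rotation and
leaves `ρ' = ρ H`. On the circle of radius `ρ`, the angular derivative `x p_y − y p_x` is the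
`θ`-derivative of `p(ρ cos θ, ρ sin θ) = ρ^k f(θ)`, i.e. `ρ^k f'(θ)`; together with
`x² + y² = ρ²` and `p(x, y) = ρ^k f(θ)` this turns `ρ H` into `c ρ^{k+1} h(ρ², ρ^k f) f'`.
-/

namespace MvPolynomial

variable {σ : Type*}

theorem IsHomogeneous.eval_smul {R : Type*} [CommSemiring R] {φ : MvPolynomial σ R} {n : ℕ}
    (hφ : φ.IsHomogeneous n) (t : R) (v : σ → R) :
    eval (t • v) φ = t ^ n * eval v φ := by
  rw [eval_eq, eval_eq, Finset.mul_sum]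
  refine Finset.sum_congr rfl fun d hd => ?_
  have hdeg : ∑ i ∈ d.support, d i = n := by
    rw [← hφ (mem_support_iff.mp hd), Finsupp.weight_apply]
    simp [Finsupp.sum]
  simp only [Pi.smul_apply, smul_eq_mul, mul_pow, Finset.prod_mul_distrib,
    Finset.prod_pow_eq_pow_sum, hdeg]
  ring

section Deriv

variable {𝕜 : Type*} [NontriviallyNormedField 𝕜]

theorem hasDerivAt_eval [Fintype σ] (p : MvPolynomial σ 𝕜) {γ : 𝕜 → σ → 𝕜} {γ' : σ → 𝕜}
    {t : 𝕜} (hγ : HasDerivAt γ γ' t) :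
    HasDerivAt (fun s => eval (γ s) p) (∑ i, eval (γ t) (pderiv i p) * γ' i) t := by
  classical
  induction p using MvPolynomial.induction_on with
  | C a => simpa using hasDerivAt_const t a
  | add p q hp hq =>
    simp only [map_add, add_mul, Finset.sum_add_distrib]
    exact hp.add hq
  | mul_X p j hp =>
    simp only [eval_mul, eval_X]
    refine (hp.mul (hasDerivAt_pi.1 hγ j)).congr_deriv ?_
    simp only [Derivation.leibniz, pderiv_X, Pi.single_apply, smul_eq_mul, mul_ite, mul_one,
      mul_zero, map_add, map_mul, eval_X, add_mul, Finset.sum_add_distrib, apply_ite (eval _),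
      ite_mul, map_zero, zero_mul, Finset.sum_ite_eq, Finset.mem_univ, if_true, Finset.sum_mul]
    rw [add_comm]
    congr 1
    exact Finset.sum_congr rfl fun _ _ => by ring

theorem hasDerivAt_eval_fin_two (p : MvPolynomial (Fin 2) 𝕜) {a b : 𝕜 → 𝕜} {a' b' t : 𝕜}
    (ha : HasDerivAt a a' t) (hb : HasDerivAt b b' t) :
    HasDerivAt (fun s => eval ![a s, b s] p)
      (eval ![a t, b t] (pderiv 0 p) * a' + eval ![a t, b t] (pderiv 1 p) * b') t := by
  have hγ : HasDerivAt (fun s => ![a s, b s]) ![a', b'] t :=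
    hasDerivAt_pi.2 fun i => by fin_cases i <;> simpa
  simpa [Fin.sum_univ_two] using hasDerivAt_eval p hγ

theorem deriv_eval_fin_two_fst (p : MvPolynomial (Fin 2) 𝕜) (x y : 𝕜) :
    deriv (fun x' => eval ![x', y] p) x = eval ![x, y] (pderiv 0 p) := by
  simpa using (hasDerivAt_eval_fin_two p (hasDerivAt_id x) (hasDerivAt_const x y)).deriv

theorem deriv_eval_fin_two_snd (p : MvPolynomial (Fin 2) 𝕜) (x y : 𝕜) :
    deriv (fun y' => eval ![x, y'] p) y = eval ![x, y] (pderiv 1 p) := by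
  simpa using (hasDerivAt_eval_fin_two p (hasDerivAt_const y x) (hasDerivAt_id y)).deriv

end Deriv

section Polar

variable {p : MvPolynomial (Fin 2) ℝ} {k : ℕ}

theorem IsHomogeneous.eval_polar (hp : p.IsHomogeneous k) (s θ : ℝ) :
    eval ![s * cos θ, s * sin θ] p = s ^ k * eval ![cos θ, sin θ] p := by
  rw [← hp.eval_smul]
  simp

theorem IsHomogeneous.angular_deriv_eval_polar (hp : p.IsHomogeneous k) (s θ : ℝ) :
    s * cos θ * eval ![s * cos θ, s * sin θ] (pderiv 1 p)
      - s * sin θ * eval ![s * cos θ, s * sin θ] (pderiv 0 p)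
      = s ^ k * deriv (fun t => eval ![cos t, sin t] p) θ := by
  have hchain := hasDerivAt_eval_fin_two p ((hasDerivAt_cos θ).const_mul s)
    ((hasDerivAt_sin θ).const_mul s)
  have hscaled : HasDerivAt (fun t => eval ![s * cos t, s * sin t] p)
      (s ^ k * deriv (fun t => eval ![cos t, sin t] p) θ) θ := by
    simp only [hp.eval_polar]
    exact ((hasDerivAt_eval_fin_two p (hasDerivAt_cos θ) (hasDerivAt_sin θ)).differentiableAt
      |>.hasDerivAt).const_mul _
  rw [← hchain.unique hscaled]
  ring

end Polar

end MvPolynomial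

theorem radial_deriv_eq_of_polar_system {ρ : ℝ → ℝ} {r θ G : ℝ} (hρ : HasDerivAt ρ r θ)
    (hx : HasDerivAt (fun t => ρ t * cos t) (-(ρ θ * sin θ) + ρ θ * cos θ * G) θ)
    (hy : HasDerivAt (fun t => ρ t * sin t) (ρ θ * cos θ + ρ θ * sin θ * G) θ) :
    r = ρ θ * G := by
  have hcos := (hρ.mul (hasDerivAt_cos θ)).unique hx
  have hsin := (hρ.mul (hasDerivAt_sin θ)).unique hy
  linear_combination cos θ * hcos + sin θ * hsin + (ρ θ * G - r) * sin_sq_add_cos_sq θ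

/-- Theorem 2 (reduction to polar coordinates): with `q = c(x p_y − y p_x)`,
`p` homogeneous of degree `k`, `H = q·h(x²+y², p)`, a solution curve of the
system written as `(ρ(θ) cos θ, ρ(θ) sin θ)` satisfies
`ρ' = c ρ^{k+1} h(ρ², ρ^k f(θ)) f'(θ)` with `f(θ) = p(cos θ, sin θ)`. -/
theorem stmt15 (k : ℕ) (c : ℝ)
    (p : MvPolynomial (Fin 2) ℝ) (hp : p.IsHomogeneous k)
    (h : MvPolynomial (Fin 2) ℝ)
    (q : ℝ → ℝ → ℝ)
    (hq : ∀ x y, q x y = c * (x * deriv (fun y' => eval ![x, y'] p) y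
      - y * deriv (fun x' => eval ![x', y] p) x))
    (f : ℝ → ℝ) (hf : ∀ θ, f θ = eval ![cos θ, sin θ] p)
    (H : ℝ → ℝ → ℝ)
    (hH : ∀ x y, H x y = q x y * eval ![x ^ 2 + y ^ 2, eval ![x, y] p] h)
    (ρ : ℝ → ℝ) (r θ : ℝ)
    (hρ : HasDerivAt ρ r θ)
    (hxeq : HasDerivAt (fun t => ρ t * cos t)
      (-(ρ θ * sin θ) + (ρ θ * cos θ) * H (ρ θ * cos θ) (ρ θ * sin θ)) θ)
    (hyeq : HasDerivAt (fun t => ρ t * sin t)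
      ((ρ θ * cos θ) + (ρ θ * sin θ) * H (ρ θ * cos θ) (ρ θ * sin θ)) θ) :
    r = c * ρ θ ^ (k + 1) * eval ![ρ θ ^ 2, ρ θ ^ k * f θ] h * deriv f θ := by
  obtain rfl : f = fun t => eval ![cos t, sin t] p := funext hf
  have hradius : (ρ θ * cos θ) ^ 2 + (ρ θ * sin θ) ^ 2 = ρ θ ^ 2 := by
    rw [mul_pow, mul_pow, ← mul_add, cos_sq_add_sin_sq, mul_one]
  rw [radial_deriv_eq_of_polar_system hρ hxeq hyeq, hH, hq, deriv_eval_fin_two_fst,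
    deriv_eval_fin_two_snd, hradius, hp.eval_polar, hp.angular_deriv_eval_polar]
  ring
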